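/- Dynamic enforcement realizes the static RTW trace constraint: for every allowed trace T and every carrier f : F, the sublist of T consisting of exactly the tainted writes to f and the exposed reads of f consists of a (possibly empty) block of exposed reads of f followed by a (possibly empty) block of tainted writes to f. Equivalently, every allowed trace is RTW-safe for every carrier with respect to tainted writes: its projection onto tainted writes to f and exposed reads of f lies in (read f)* (tainted-write f)*. -/

import Mathlib

/-- Events: writes (with attacker-influence flag), exposed reads of a carrier,
exposed external reads, opaque local reads, and high-risk actions. -/
inductive Event (F : Type) where
  | write : F → Bool → Event F
  | read : F → Event F
  | ext : Event F
  | opaq : F → Event F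
  | act : Event F

/-- Runtime state: per-carrier taint labels and LLM contamination flag. -/
structure St (F : Type) where
  taint : F → Bool
  cont : Bool

variable {F : Type} [DecidableEq F]

/-- Initial state: all carriers clean, LLM uncontaminated. -/
def St.init : St F := ⟨fun _ => false, false⟩

/-- Transition semantics. -/
def step (s : St F) : Event F → St F
  | .write f b => ⟨Function.update s.taint f (s.taint f || b || s.cont), s.cont⟩
  | .read f => ⟨s.taint, s.cont || s.taint f⟩
  | .ext => ⟨s.taint, true⟩
  | .opaq _ => s
  | .act => s

/-- State obtained by executing a trace from the initial state. -/
def run (T : List (Event F)) : St F := T.foldl step St.init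

/-- Permission rule: reads of tainted carriers are denied; high-risk actions are
denied under contamination; everything else is permitted. -/
def permitted (s : St F) : Event F → Prop
  | .read f => s.taint f = false
  | .act => s.cont = false
  | _ => True

/-- A trace is allowed if each event is permitted in the state obtained by
executing the preceding events. -/
def Allowed (T : List (Event F)) : Prop :=
  ∀ i (h : i < T.length), permitted (run (T.take i)) (T.get ⟨i, h⟩)

/-- Whether the event `e`, occurring at position `i` of the trace `T`, is a
tainted write to carrier `f`: a write `write f b` with `b = true` or performed
while the LLM decision state was contaminated. -/
def isTaintedWrite (T : List (Event F)) (f : F) (i : ℕ) (e : Event F) : Bool :=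
  match e with
  | .write g b => decide (g = f) && (b || (run (T.take i)).cont)
  | _ => false

/-- Whether the event `e` is an exposed read of the carrier `f`. -/
def isReadOf (f : F) (e : Event F) : Bool :=
  match e with
  | .read g => decide (g = f)
  | _ => false

lemma taint_mono (f : F) (s : St F) (l : List (Event F)) (h : s.taint f = true) :
    (l.foldl step s).taint f = true := by
  induction l generalizing s with
  | nil => exact h
  | cons e l ih =>
    apply ih
    cases e with
    | write g b =>
      simp only [step, Function.update]
      split <;> simp_all
    | read g => exact h
    | ext => exact h
    | opaq g => exact h
    | act => exact h

lemma run_take_succ (T : List (Event F)) (i : ℕ) (h : i < T.length) :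
    run (T.take (i+1)) = step (run (T.take i)) (T.get ⟨i, h⟩) := by
  rw [run, List.take_succ, List.foldl_append]
  simp [List.getElem?_eq_getElem h, run]

lemma taint_after_tw (T : List (Event F)) (f : F) (i : ℕ) (h : i < T.length)
    (hw : isTaintedWrite T f i (T.get ⟨i, h⟩) = true) (j : ℕ) (hij : i < j) :
    (run (T.take j)).taint f = true := by
  have h1 : (run (T.take (i+1))).taint f = true := by
    rw [run_take_succ T i h]
    cases e : T.get ⟨i, h⟩ with
    | write g b =>
      rw [e] at hw
      simp only [isTaintedWrite, Bool.and_eq_true, decide_eq_true_eq] at hw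
      obtain ⟨rfl, h2⟩ := hw
      simp only [step, Function.update_self]
      rw [Bool.or_assoc, h2, Bool.or_true]
    | read g => rw [e] at hw; simp [isTaintedWrite] at hw
    | ext => rw [e] at hw; simp [isTaintedWrite] at hw
    | opaq g => rw [e] at hw; simp [isTaintedWrite] at hw
    | act => rw [e] at hw; simp [isTaintedWrite] at hw
  have hj : j = (i+1) + (j - (i+1)) := by omega
  rw [hj, List.take_add, run, List.foldl_append]
  exact taint_mono f _ _ h1

lemma all_writes (f : F) (l : List (Event F))
    (h : ∀ e ∈ l, ∃ b, e = Event.write f b) :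
    ∃ bs : List Bool, l = bs.map (fun b => Event.write f b) := by
  induction l with
  | nil => exact ⟨[], rfl⟩
  | cons e l ih =>
    obtain ⟨b, rfl⟩ := h e (by simp)
    obtain ⟨bs, hb⟩ := ih (fun e he => h e (by simp [he]))
    exact ⟨b :: bs, by simp [hb]⟩

lemma decomp (f : F) (l : List (Event F))
    (hmem : ∀ e ∈ l, e = Event.read f ∨ ∃ b, e = Event.write f b)
    (hp : l.Pairwise (fun a b => a ≠ Event.read f → b ≠ Event.read f)) :
    ∃ (m : ℕ) (bs : List Bool),
      l = List.replicate m (Event.read f) ++ bs.map (fun b => Event.write f b) := by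
  induction l with
  | nil => exact ⟨0, [], rfl⟩
  | cons e l ih =>
    rcases hmem e (by simp) with rfl | ⟨b, rfl⟩
    · obtain ⟨m, bs, hl⟩ := ih (fun e he => hmem e (by simp [he])) hp.tail
      exact ⟨m+1, bs, by simp [hl, List.replicate_succ]⟩
    · have hall : ∀ e ∈ l, ∃ b, e = Event.write f b := by
        intro e he
        rcases hmem e (by simp [he]) with rfl | hb
        · exact absurd rfl (List.rel_of_pairwise_cons hp he (by simp))
        · exact hb
      obtain ⟨bs, hbs⟩ := all_writes f l hall
      exact ⟨0, b :: bs, by simp [hbs]⟩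

/-- Dynamic enforcement realizes the static RTW trace constraint: for every
allowed trace and every carrier `f`, the sublist of the trace consisting of
exactly the tainted writes to `f` and the exposed reads of `f` consists of a
(possibly empty) block of exposed reads of `f` followed by a (possibly empty)
block of (tainted) writes to `f`, i.e. it lies in `(read f)* (tainted-write f)*`. -/
theorem allowed_is_rtw_safe (T : List (Event F)) (hT : Allowed T) (f : F) :
    ∃ (m : ℕ) (bs : List Bool),
      (((T.zipIdx.map Prod.swap).filter
          (fun p => isTaintedWrite T f p.1 p.2 || isReadOf f p.2)).map Prod.snd)
        = List.replicate m (Event.read f) ++ bs.map (fun b => Event.write f b) := by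
  set L := (T.zipIdx.map Prod.swap).filter
      (fun p => isTaintedWrite T f p.1 p.2 || isReadOf f p.2) with hL
  have henum : ∀ p ∈ (T.zipIdx.map Prod.swap), ∃ h : p.1 < T.length, T.get ⟨p.1, h⟩ = p.2 := by
    rintro ⟨i, a⟩ hp
    have hp' : (a, i) ∈ T.zipIdx := by
      obtain ⟨q, hq, hqe⟩ := List.mem_map.mp hp
      have hq2 : q = (a, i) := by rw [← Prod.swap_swap q, hqe]; rfl
      subst hq2; exact hq
    have := List.mem_zipIdx_iff_getElem?.mp hp'
    rw [List.getElem?_eq_some_iff] at this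
    obtain ⟨h, hg⟩ := this
    exact ⟨h, by simpa using hg⟩
  have hplt : (T.zipIdx.map Prod.swap).Pairwise (fun p q => p.1 < q.1) := by
    have h1 : ((T.zipIdx.map Prod.swap).map Prod.fst).Pairwise (· < ·) := by
      rw [List.map_map, show (Prod.fst ∘ Prod.swap : Event F × ℕ → ℕ) = Prod.snd from rfl,
        List.zipIdx_map_snd]
      exact List.pairwise_lt_range'
    exact (List.pairwise_map.mp h1)
  have hLlt : L.Pairwise (fun p q => p.1 < q.1) :=
    hplt.sublist List.filter_sublist
  have hLp : L.Pairwise (fun p q => p.2 ≠ Event.read f → q.2 ≠ Event.read f) := by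
    refine hLlt.imp_of_mem ?_
    intro p q hpL hqL hlt hpne hqr
    have hpE : p ∈ (T.zipIdx.map Prod.swap) := List.mem_of_mem_filter hpL
    have hqE : q ∈ (T.zipIdx.map Prod.swap) := List.mem_of_mem_filter hqL
    obtain ⟨hpl, hpg⟩ := henum p hpE
    obtain ⟨hql, hqg⟩ := henum q hqE
    have hpred : (isTaintedWrite T f p.1 p.2 || isReadOf f p.2) = true := by
      simpa using (List.mem_filter.mp hpL).2
    have hnr : isReadOf f p.2 = false := by
      cases e : p.2 with
      | read g =>
        simp only [isReadOf, decide_eq_false_iff_not]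
        rintro rfl
        exact hpne (by rw [e])
      | write g b => rfl
      | ext => rfl
      | opaq g => rfl
      | act => rfl
    rw [hnr, Bool.or_false] at hpred
    have htaint : (run (T.take q.1)).taint f = true := by
      apply taint_after_tw T f p.1 hpl _ q.1 hlt
      rw [hpg]; exact hpred
    have := hT q.1 hql
    rw [hqg, hqr] at this
    simp only [permitted] at this
    rw [this] at htaint
    exact Bool.false_ne_true htaint
  apply decomp
  · intro e he
    rw [List.mem_map] at he
    obtain ⟨p, hpL, rfl⟩ := he
    have hpred : (isTaintedWrite T f p.1 p.2 || isReadOf f p.2) = true := by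
      simpa using (List.mem_filter.mp hpL).2
    cases e2 : p.2 with
    | write g b =>
      rw [e2] at hpred
      simp only [isTaintedWrite, isReadOf, Bool.or_false, Bool.and_eq_true,
        decide_eq_true_eq] at hpred
      exact Or.inr ⟨b, by rw [hpred.1]⟩
    | read g =>
      rw [e2] at hpred
      simp only [isTaintedWrite, isReadOf, Bool.false_or, decide_eq_true_eq] at hpred
      exact Or.inl (by rw [hpred])
    | ext => rw [e2] at hpred; simp [isTaintedWrite, isReadOf] at hpred
    | opaq g => rw [e2] at hpred; simp [isTaintedWrite, isReadOf] at hpred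
    | act => rw [e2] at hpred; simp [isTaintedWrite, isReadOf] at hpred
  · exact List.pairwise_map.mpr hLp
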